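/- Let ρ, c, k, ℓ, γ, D∞ be positive reals, α = k/(ρc), 0 < ε < 1, and suppose h₀ > (1/D∞)√(γ(1-ε)ρℓk/2). Let ξ > 0 be the unique solution of (D∞c/(ℓ√π))·exp(-x²)/(k/(h₀√(πα)) + erf(x)) = x + (γ(1-ε)√π/(2D∞))·(k/(h₀√(πα)) + erf(x))·exp(x²), and set D₀ = D∞·erf(ξ)/(k/(h₀√(πα)) + erf(ξ)). Then D∞ > D₀ and erf(ξ) < (D∞D₀/(D∞ - D₀))·√(2c/(πγ(1-ε)ℓ)). -/

import Mathlib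

open Real Filter Set Topology

/-- The error function `erf x = (2/√π) ∫₀ˣ exp(-t²) dt`. -/
noncomputable def erf (x : ℝ) : ℝ := (2 / Real.sqrt π) * ∫ t in (0:ℝ)..x, Real.exp (-t ^ 2)

/-! Since `D₀ = D∞ E / (A + E)` with `A = k/(h₀√(πα)) > 0` and `E = erf ξ > 0`, we get `D₀ < D∞`
and `D∞ D₀ / (D∞ - D₀) = D∞ E / A`, so the second claim is equivalent to `A < D∞ √(2c/(πγ(1-ε)ℓ))`.
Squared, this is exactly the lower bound on `h₀`. -/

lemma erf_pos {x : ℝ} (hx : 0 < x) : 0 < erf x := by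
  refine mul_pos (by positivity) (intervalIntegral.intervalIntegral_pos_of_pos_on ?_ ?_ hx)
  · exact (by fun_prop : Continuous fun t : ℝ => Real.exp (-t ^ 2)).intervalIntegrable _ _
  · intro t _
    positivity

lemma sq_div_mul_sqrt_pi_diffusivity {ρ c k h₀ : ℝ} (hρ : 0 < ρ) (hc : 0 < c) (hk : 0 < k) :
    (k / (h₀ * √(π * (k / (ρ * c))))) ^ 2 = k * ρ * c / (π * h₀ ^ 2) := by
  rw [div_pow, mul_pow, Real.sq_sqrt (by positivity)]
  field_simp

lemma div_mul_sqrt_pi_diffusivity_lt {ρ c k ℓ β D h₀ : ℝ} (hρ : 0 < ρ) (hc : 0 < c)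
    (hk : 0 < k) (hℓ : 0 < ℓ) (hβ : 0 < β) (hD : 0 < D)
    (hh : h₀ > (1 / D) * √(β * ρ * ℓ * k / 2)) :
    k / (h₀ * √(π * (k / (ρ * c)))) < D * √(2 * c / (π * β * ℓ)) := by
  have hh₀ : 0 < h₀ := hh.trans_le' (by positivity)
  have hh' : √(β * ρ * ℓ * k / 2) < h₀ * D := by
    rwa [gt_iff_lt, one_div_mul_eq_div, div_lt_iff₀ hD] at hh
  have hsq : β * ρ * ℓ * k / 2 < (h₀ * D) ^ 2 := (Real.sqrt_lt' (by positivity)).mp hh'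
  refine lt_of_pow_lt_pow_left₀ 2 (by positivity) ?_
  rw [sq_div_mul_sqrt_pi_diffusivity hρ hc hk, mul_pow, Real.sq_sqrt (by positivity),
    div_lt_iff₀ (by positivity)]
  field_simp
  nlinarith

section InducedTemperature

variable {D A E : ℝ}

lemma mul_div_add_lt_self (hD : 0 < D) (hA : 0 < A) (hE : 0 < E) : D * E / (A + E) < D := by
  rw [div_lt_iff₀ (by positivity)]
  nlinarith

lemma mul_mul_div_add_div_sub (hD : 0 < D) (hA : 0 < A) (hE : 0 < E) :
    D * (D * E / (A + E)) / (D - D * E / (A + E)) = D * E / A := by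
  have hsub : D - D * E / (A + E) = D * A / (A + E) := by
    field_simp
    ring
  rw [hsub]
  field_simp

end InducedTemperature

theorem stmt_14_general (ρ c k ℓ γ Dinf h₀ α ε ξ D₀ : ℝ)
    (hρ : 0 < ρ) (hc : 0 < c) (hk : 0 < k) (hℓ : 0 < ℓ) (hγ : 0 < γ) (hD : 0 < Dinf)
    (hα : α = k / (ρ * c)) (hε1 : ε < 1)
    (hh : h₀ > (1 / Dinf) * Real.sqrt (γ * (1 - ε) * ρ * ℓ * k / 2))
    (hξpos : 0 < ξ)
    (hD₀ : D₀ = Dinf * erf ξ / (k / (h₀ * Real.sqrt (π * α)) + erf ξ)) :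
    Dinf > D₀ ∧
    erf ξ < (Dinf * D₀ / (Dinf - D₀)) * Real.sqrt (2 * c / (π * γ * (1 - ε) * ℓ)) := by
  subst hα hD₀
  have hkey := div_mul_sqrt_pi_diffusivity_lt hρ hc hk hℓ
    (mul_pos hγ (sub_pos.mpr hε1)) hD hh
  rw [← mul_assoc π] at hkey
  set A := k / (h₀ * √(π * (k / (ρ * c))))
  have hA : 0 < A := div_pos hk (mul_pos (hh.trans_le' (by positivity)) (by positivity))
  have hE := erf_pos hξpos
  refine ⟨mul_div_add_lt_self hD hA hE, ?_⟩
  rw [mul_mul_div_add_div_sub hD hA hE, div_mul_eq_mul_div, lt_div_iff₀ hA]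
  linarith [mul_lt_mul_of_pos_left hkey hE]

/-- Inequality for the interface coefficient of the convective problem:
`D∞ > D₀` and `erf ξ < (D∞D₀/(D∞ - D₀))·√(2c/(πγ(1-ε)ℓ))`. -/
theorem stmt_14 (ρ c k ℓ γ Dinf h₀ α ε ξ D₀ : ℝ)
    (hρ : 0 < ρ) (hc : 0 < c) (hk : 0 < k) (hℓ : 0 < ℓ) (hγ : 0 < γ) (hD : 0 < Dinf)
    (hα : α = k / (ρ * c)) (hε0 : 0 < ε) (hε1 : ε < 1)
    (hh : h₀ > (1 / Dinf) * Real.sqrt (γ * (1 - ε) * ρ * ℓ * k / 2))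
    (hξpos : 0 < ξ)
    (hξeq : (Dinf * c / (ℓ * Real.sqrt π)) * Real.exp (-ξ ^ 2) /
        (k / (h₀ * Real.sqrt (π * α)) + erf ξ) =
      ξ + (γ * (1 - ε) * Real.sqrt π / (2 * Dinf)) *
        (k / (h₀ * Real.sqrt (π * α)) + erf ξ) * Real.exp (ξ ^ 2))
    (hξuniq : ∀ y > (0:ℝ),
      (Dinf * c / (ℓ * Real.sqrt π)) * Real.exp (-y ^ 2) /
          (k / (h₀ * Real.sqrt (π * α)) + erf y) =
        y + (γ * (1 - ε) * Real.sqrt π / (2 * Dinf)) *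
          (k / (h₀ * Real.sqrt (π * α)) + erf y) * Real.exp (y ^ 2) → y = ξ)
    (hD₀ : D₀ = Dinf * erf ξ / (k / (h₀ * Real.sqrt (π * α)) + erf ξ)) :
    Dinf > D₀ ∧
    erf ξ < (Dinf * D₀ / (Dinf - D₀)) * Real.sqrt (2 * c / (π * γ * (1 - ε) * ℓ)) :=
  stmt_14_general ρ c k ℓ γ Dinf h₀ α ε ξ D₀ hρ hc hk hℓ hγ hD hα hε1 hh hξpos hD₀
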